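/- arXiv:2110.07308 — 4 statements merged into one kernel-verified Lean document; each statement's English description precedes it below -/
import Mathlib

section
/- The Fenchel conjugate of f₂(x) = (λ/M)‖x_S‖₁ + ι_{x_{S'} = 0}(x) + ι_{‖x‖∞ ≤ M}(x) evaluated at v ∈ ℝ^n equals Σ_{i∈S} M·max(0, |vᵢ| − λ/M) + M·‖v_{S''}‖₁. -/
/-!
The objective `x ↦ ⟨v, x⟩ - (λ/M) ‖x_S‖₁` is separable and the constraint set is a box, so the
supremum is the sum of one-dimensional suprema. Coordinate `i` contributes `t ↦ vᵢ t - cᵢ |t|` on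
`[-rᵢ, rᵢ]`, with `cᵢ = λ/M` on `S` and `0` elsewhere, `rᵢ = 0` on `S'` and `M` elsewhere; its
maximum `rᵢ · max 0 (|vᵢ| - cᵢ)` is attained at `±rᵢ`, signed like `vᵢ`, when `cᵢ < |vᵢ|` and at `0` otherwise.
-/

open Finset

theorem isGreatest_sum_image_univ_pi {ι β : Type*} {α : ι → Type*} [Fintype ι]
    [AddCommMonoid β] [PartialOrder β] [IsOrderedAddMonoid β]
    {s : ∀ i, Set (α i)} {g : ∀ i, α i → β} {a : ι → β}
    (h : ∀ i, IsGreatest (g i '' s i) (a i)) :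
    IsGreatest ((fun x => ∑ i, g i (x i)) '' Set.univ.pi s) (∑ i, a i) := by
  choose x hx hxa using fun i => (h i).1
  refine ⟨⟨x, Set.mem_univ_pi.2 hx, sum_congr rfl fun i _ => hxa i⟩, ?_⟩
  rintro _ ⟨y, hy, rfl⟩
  exact sum_le_sum fun i _ => (h i).2 ⟨y i, Set.mem_univ_pi.1 hy i, rfl⟩

theorem isGreatest_mul_sub_mul_abs_image_abs_le (v c : ℝ) {r : ℝ} (hr : 0 ≤ r) :
    IsGreatest ((fun x => v * x - c * |x|) '' {x | |x| ≤ r}) (r * max 0 (|v| - c)) := by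
  refine ⟨?_, ?_⟩
  · by_cases hc : c < |v|
    · refine ⟨if 0 ≤ v then r else -r, ?_, ?_⟩
      · split_ifs <;> simp [abs_of_nonneg hr]
      · rw [max_eq_right (sub_nonneg.2 hc.le)]
        split_ifs with hv
        · simp only [abs_of_nonneg hr, abs_of_nonneg hv]; ring
        · simp only [mul_neg, abs_neg, abs_of_nonneg hr, abs_of_neg (not_le.1 hv)]; ring
    · exact ⟨0, by simpa using hr, by simp [max_eq_left (by linarith : |v| - c ≤ 0)]⟩
  · rintro _ ⟨x, hx : |x| ≤ r, rfl⟩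
    calc v * x - c * |x| ≤ (|v| - c) * |x| := by
          nlinarith [abs_mul v x, le_abs_self (v * x)]
      _ ≤ max 0 (|v| - c) * |x| := by gcongr; exact le_max_right _ _
      _ ≤ max 0 (|v| - c) * r := by gcongr
      _ = r * max 0 (|v| - c) := mul_comm _ _

theorem sum_sub_mul_sum_eq_sum_sub_ite_mul {ι R : Type*} [Fintype ι] [DecidableEq ι]
    [NonUnitalNonAssocRing R] (S : Finset ι) (a : R) (f g : ι → R) :
    ∑ i, f i - a * ∑ i ∈ S, g i = ∑ i, (f i - (if i ∈ S then a else 0) * g i) := by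
  simp only [sum_sub_distrib, ite_mul, zero_mul, sum_ite_mem, univ_inter, mul_sum]

theorem forall_abs_le_and_forall_mem_eq_zero_iff {ι : Type*} [DecidableEq ι] (T : Finset ι) {M : ℝ}
    (hM : 0 ≤ M) (x : ι → ℝ) :
    ((∀ i, |x i| ≤ M) ∧ ∀ i ∈ T, x i = 0) ↔ ∀ i, |x i| ≤ if i ∈ T then 0 else M := by
  refine ⟨fun ⟨hbound, hzero⟩ i => ?_, fun h => ⟨fun i => (h i).trans ?_, fun i hi => ?_⟩⟩
  · split_ifs with hi
    · simp [hzero i hi]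
    · exact hbound i
  · split_ifs <;> simp [hM]
  · simpa [hi] using h i

theorem sum_univ_eq_sum_add_sum_add_sum {ι M : Type*} [Fintype ι] [DecidableEq ι]
    [AddCommMonoid M] {S S' S'' : Finset ι} (hcover : S ∪ S' ∪ S'' = univ)
    (hSS' : Disjoint S S') (hSS'' : Disjoint S S'') (hS'S'' : Disjoint S' S'') (f : ι → M) :
    ∑ i, f i = ∑ i ∈ S, f i + ∑ i ∈ S', f i + ∑ i ∈ S'', f i := by
  rw [← hcover, sum_union (disjoint_union_left.2 ⟨hSS'', hS'S''⟩), sum_union hSS']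

theorem fenchel_conjugate_f2_general {n : ℕ} (S S' S'' : Finset (Fin n))
    (hcover : S ∪ S' ∪ S'' = Finset.univ)
    (hSS' : Disjoint S S') (hSS'' : Disjoint S S'') (hS'S'' : Disjoint S' S'')
    (lam M : ℝ) (hM : 0 < M) (v : Fin n → ℝ) :
    IsGreatest
      {c : ℝ | ∃ x : Fin n → ℝ, (∀ i, |x i| ≤ M) ∧ (∀ i ∈ S', x i = 0) ∧
        c = (∑ i, v i * x i) - (lam / M) * ∑ i ∈ S, |x i|}
      ((∑ i ∈ S, M * max 0 (|v i| - lam / M)) + M * ∑ i ∈ S'', |v i|) := by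
  set c : Fin n → ℝ := fun i => if i ∈ S then lam / M else 0
  set r : Fin n → ℝ := fun i => if i ∈ S' then 0 else M
  have hset : {c : ℝ | ∃ x : Fin n → ℝ, (∀ i, |x i| ≤ M) ∧ (∀ i ∈ S', x i = 0) ∧
        c = (∑ i, v i * x i) - (lam / M) * ∑ i ∈ S, |x i|} =
      (fun x => ∑ i, (v i * x i - c i * |x i|)) '' Set.univ.pi fun i => {t | |t| ≤ r i} := by
    ext a
    simp only [Set.mem_ofPred_eq, Set.mem_image, Set.mem_univ_pi]
    refine exists_congr fun x => ?_
    rw [sum_sub_mul_sum_eq_sum_sub_ite_mul, eq_comm, ← and_assoc,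
      forall_abs_le_and_forall_mem_eq_zero_iff S' hM.le]
  have hval : ∑ i, r i * max 0 (|v i| - c i) =
      ∑ i ∈ S, M * max 0 (|v i| - lam / M) + M * ∑ i ∈ S'', |v i| := by
    have onS : ∀ i ∈ S, r i * max 0 (|v i| - c i) = M * max 0 (|v i| - lam / M) :=
      fun i hi => by simp [r, c, hi, disjoint_left.1 hSS' hi]
    have onS' : ∀ i ∈ S', r i * max 0 (|v i| - c i) = 0 := fun i hi => by simp [r, hi]
    have onS'' : ∀ i ∈ S'', r i * max 0 (|v i| - c i) = M * |v i| :=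
      fun i hi => by simp [r, c, disjoint_right.1 hSS'' hi, disjoint_right.1 hS'S'' hi]
    rw [sum_univ_eq_sum_add_sum_add_sum hcover hSS' hSS'' hS'S'', sum_congr rfl onS,
      sum_congr rfl onS', sum_congr rfl onS'', sum_const_zero, add_zero, mul_sum]
  rw [hset, ← hval]
  exact isGreatest_sum_image_univ_pi fun i =>
    isGreatest_mul_sub_mul_abs_image_abs_le _ _ (by simp only [r]; split_ifs <;> positivity)

/-- Fenchel conjugate of f₂(x) = (λ/M)‖x_S‖₁ + ι_{x_{S'}=0}(x) + ι_{‖x‖∞≤M}(x):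
the supremum defining the conjugate (taken over the effective domain) is attained
and equals Σ_{i∈S} M·max(0, |vᵢ| − λ/M) + M·‖v_{S''}‖₁. -/
theorem fenchel_conjugate_f2 {n : ℕ} (S S' S'' : Finset (Fin n))
    (hcover : S ∪ S' ∪ S'' = Finset.univ)
    (hSS' : Disjoint S S') (hSS'' : Disjoint S S'') (hS'S'' : Disjoint S' S'')
    (lam M : ℝ) (hlam : 0 < lam) (hM : 0 < M) (v : Fin n → ℝ) :
    IsGreatest
      {c : ℝ | ∃ x : Fin n → ℝ, (∀ i, |x i| ≤ M) ∧ (∀ i ∈ S', x i = 0) ∧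
        c = (∑ i, v i * x i) - (lam / M) * ∑ i ∈ S, |x i|}
      ((∑ i ∈ S, M * max 0 (|v i| - lam / M)) + M * ∑ i ∈ S'', |v i|) :=
  fenchel_conjugate_f2_general S S' S'' hcover hSS' hSS'' hS'S'' lam M hM v
end

section
/- Weak duality: for every u ∈ ℝ^m and every x ∈ ℝ^n feasible for the node relaxation (i.e., ‖x‖∞ ≤ M and x_{S₀} = 0), one has D(u) ≤ (1/2)‖y − Ax‖² + (λ/M)‖x_{S̄}‖₁ + λ|S₁|, where D(u) = (1/2)‖y‖² − (1/2)‖y − u‖² − Σ_{i∈S̄} π⁰ᵢ(u) − Σ_{i∈S₁} πᵢ(u). -/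
/-- Pivot value πᵢ(u) = M(|aᵢᵀu| − λ/M). -/
noncomputable def piv {m n : ℕ} (A : Fin m → Fin n → ℝ) (lam M : ℝ)
    (i : Fin n) (u : Fin m → ℝ) : ℝ :=
  M * (|∑ j, A j i * u j| - lam / M)

/-- Pivot value π⁰ᵢ(u) = M·max(0, |aᵢᵀu| − λ/M). -/
noncomputable def piv0 {m n : ℕ} (A : Fin m → Fin n → ℝ) (lam M : ℝ)
    (i : Fin n) (u : Fin m → ℝ) : ℝ :=
  M * max 0 (|∑ j, A j i * u j| - lam / M)

/-- Pivot value π¹ᵢ(u) = M·max(0, λ/M − |aᵢᵀu|). -/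
noncomputable def piv1 {m n : ℕ} (A : Fin m → Fin n → ℝ) (lam M : ℝ)
    (i : Fin n) (u : Fin m → ℝ) : ℝ :=
  M * max 0 (lam / M - |∑ j, A j i * u j|)

/-- Dual objective D^ν(u) of the ℓ₁-relaxation at node ν = (S₀, S₁, S̄). -/
noncomputable def dualObj {m n : ℕ} (A : Fin m → Fin n → ℝ) (y : Fin m → ℝ)
    (lam M : ℝ) (S1 Sbar : Finset (Fin n)) (u : Fin m → ℝ) : ℝ :=
  (1/2) * ∑ j, (y j)^2 - (1/2) * ∑ j, (y j - u j)^2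
    - ∑ i ∈ Sbar, piv0 A lam M i u - ∑ i ∈ S1, piv A lam M i u

/-!
Each piece of the dual objective is a Fenchel-type lower bound for the matching piece of the
primal objective. For the quadratic part, `½‖y‖² − ½‖y − u‖² ≤ ½‖y − z‖² + ⟨u, z⟩` with
`z = Ax` (the gap is `½‖y − z − u‖²`), and `⟨u, Ax⟩ = Σᵢ xᵢ aᵢᵀu`. The coordinates are then
split along the partition: those in `S₀` contribute nothing since `xᵢ = 0`, and for the others
`|xᵢ| ≤ M` gives `xᵢ aᵢᵀu ≤ πᵢ(u) + λ` on `S₁` and `xᵢ aᵢᵀu ≤ π⁰ᵢ(u) + (λ/M)|xᵢ|` on `S̄`.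
-/

open Finset

theorem Finset.sum_eq_add_add_of_union_eq_univ {ι β : Type*} [Fintype ι] [DecidableEq ι]
    [AddCommMonoid β] {s t r : Finset ι} (hcover : s ∪ t ∪ r = univ) (hst : Disjoint s t) (hsr : Disjoint s r)
    (htr : Disjoint t r) (f : ι → β) :
    ∑ i, f i = ∑ i ∈ s, f i + ∑ i ∈ t, f i + ∑ i ∈ r, f i := by
  rw [← hcover, sum_union (disjoint_union_left.2 ⟨hsr, htr⟩), sum_union hst]

theorem half_sum_sq_sub_half_sum_sq_sub_le {ι : Type*} [Fintype ι] (y u z : ι → ℝ) :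
    (1/2) * ∑ j, y j ^ 2 - (1/2) * ∑ j, (y j - u j) ^ 2
      ≤ (1/2) * ∑ j, (y j - z j) ^ 2 + ∑ j, u j * z j := by
  simp only [mul_sum, ← sum_sub_distrib, ← sum_add_distrib]
  gcongr with j
  nlinarith [sq_nonneg (y j - z j - u j)]

theorem sum_mul_sum_comm {m n : ℕ} (A : Fin m → Fin n → ℝ) (u : Fin m → ℝ) (x : Fin n → ℝ) :
    ∑ j, u j * ∑ i, A j i * x i = ∑ i, x i * ∑ j, A j i * u j := by
  simp only [mul_sum]
  rw [sum_comm]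
  exact sum_congr rfl fun _ _ => sum_congr rfl fun _ _ => by ring

theorem mul_le_mul_abs_of_abs_le {x M : ℝ} (hx : |x| ≤ M) (c : ℝ) : x * c ≤ M * |c| := calc
  x * c ≤ |x| * |c| := by rw [← abs_mul]; exact le_abs_self _
  _ ≤ M * |c| := mul_le_mul_of_nonneg_right hx (abs_nonneg c)

theorem mul_le_mul_max_sub_add {x M : ℝ} (hx : |x| ≤ M) (c t : ℝ) :
    x * c ≤ M * max 0 (|c| - t) + t * |x| := calc
  x * c ≤ |x| * |c| := by rw [← abs_mul]; exact le_abs_self _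
  _ = |x| * (|c| - t) + t * |x| := by ring
  _ ≤ |x| * max 0 (|c| - t) + t * |x| := by gcongr; exact le_max_right _ _
  _ ≤ M * max 0 (|c| - t) + t * |x| := by gcongr

theorem mul_le_piv_add {m n : ℕ} (A : Fin m → Fin n → ℝ) (lam : ℝ) {M : ℝ} (hM : M ≠ 0)
    (i : Fin n) (u : Fin m → ℝ) {x : ℝ} (hx : |x| ≤ M) :
    x * ∑ j, A j i * u j ≤ piv A lam M i u + lam := by
  have hpiv : piv A lam M i u + lam = M * |∑ j, A j i * u j| := by
    rw [piv]; field_simp; ring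
  exact hpiv ▸ mul_le_mul_abs_of_abs_le hx _

theorem mul_le_piv0_add {m n : ℕ} (A : Fin m → Fin n → ℝ) (lam : ℝ) {M : ℝ}
    (i : Fin n) (u : Fin m → ℝ) {x : ℝ} (hx : |x| ≤ M) :
    x * ∑ j, A j i * u j ≤ piv0 A lam M i u + lam / M * |x| :=
  mul_le_mul_max_sub_add hx _ _

theorem weak_duality_general {m n : ℕ} (A : Fin m → Fin n → ℝ) (y : Fin m → ℝ)
    (lam M : ℝ) (hM : 0 < M)
    (S0 S1 Sbar : Finset (Fin n))
    (hcover : S0 ∪ S1 ∪ Sbar = Finset.univ)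
    (h01 : Disjoint S0 S1) (h0b : Disjoint S0 Sbar) (h1b : Disjoint S1 Sbar)
    (u : Fin m → ℝ) (x : Fin n → ℝ)
    (hbox : ∀ i, |x i| ≤ M) (hS0 : ∀ i ∈ S0, x i = 0) :
    dualObj A y lam M S1 Sbar u
      ≤ (1/2) * ∑ j, (y j - ∑ i, A j i * x i)^2
          + (lam / M) * (∑ i ∈ Sbar, |x i|) + lam * S1.card := by
  have hquad := half_sum_sq_sub_half_sum_sq_sub_le y u (fun j => ∑ i, A j i * x i)
  rw [sum_mul_sum_comm, sum_eq_add_add_of_union_eq_univ hcover h01 h0b h1b] at hquad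
  have hzero : ∑ i ∈ S0, x i * ∑ j, A j i * u j = 0 :=
    sum_eq_zero fun i hi => by rw [hS0 i hi, zero_mul]
  have hone : ∑ i ∈ S1, x i * ∑ j, A j i * u j ≤ ∑ i ∈ S1, piv A lam M i u + lam * S1.card := by
    simpa [sum_add_distrib, mul_comm] using
      sum_le_sum fun i (_ : i ∈ S1) => mul_le_piv_add A lam hM.ne' i u (hbox i)
  have hfree : ∑ i ∈ Sbar, x i * ∑ j, A j i * u j
      ≤ ∑ i ∈ Sbar, piv0 A lam M i u + lam / M * ∑ i ∈ Sbar, |x i| := by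
    simpa [sum_add_distrib, mul_sum] using
      sum_le_sum fun i (_ : i ∈ Sbar) => mul_le_piv0_add A lam i u (hbox i)
  rw [dualObj]
  linarith

/-- Weak duality: for every dual point u and every x feasible for the node
relaxation, D^ν(u) is at most the relaxed primal objective at x. -/
theorem weak_duality {m n : ℕ} (A : Fin m → Fin n → ℝ) (y : Fin m → ℝ)
    (lam M : ℝ) (hlam : 0 < lam) (hM : 0 < M)
    (hunit : ∀ i, ∑ j, (A j i)^2 = 1)
    (S0 S1 Sbar : Finset (Fin n))
    (hcover : S0 ∪ S1 ∪ Sbar = Finset.univ)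
    (h01 : Disjoint S0 S1) (h0b : Disjoint S0 Sbar) (h1b : Disjoint S1 Sbar)
    (u : Fin m → ℝ) (x : Fin n → ℝ)
    (hbox : ∀ i, |x i| ≤ M) (hS0 : ∀ i ∈ S0, x i = 0) :
    dualObj A y lam M S1 Sbar u
      ≤ (1/2) * ∑ j, (y j - ∑ i, A j i * x i)^2
          + (lam / M) * (∑ i ∈ Sbar, |x i|) + lam * S1.card :=
  weak_duality_general A y lam M hM S0 S1 Sbar hcover h01 h0b h1b u x hbox hS0
end

section
/- Nesting property: if screening test D^ν(u) + π⁰_ℓ(u) > p̄ passes for index ℓ ∈ S̄ at node ν, then for any descendant node ν' = (S₀', S₁', S̄') of ν with ℓ ∈ S̄', the same test passes at ν', i.e., D^{ν'}(u) + π⁰_ℓ(u) > p̄. -/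
open Finset

theorem Finset.sum_add_sum_le_of_sdiff_subset_sdiff {ι β : Type*} [DecidableEq ι]
    [AddCommMonoid β] [PartialOrder β] [IsOrderedAddMonoid β] {f g : ι → β}
    {S S' T T' : Finset ι} (hS : S ⊆ S') (hT : T' ⊆ T) (hST : S' \ S ⊆ T \ T')
    (hfg : ∀ i ∈ S' \ S, f i ≤ g i) (hg : ∀ i ∈ T \ T', 0 ≤ g i) :
    ∑ i ∈ T', g i + ∑ i ∈ S', f i ≤ ∑ i ∈ T, g i + ∑ i ∈ S, f i := by
  have hnew : ∑ i ∈ S' \ S, f i ≤ ∑ i ∈ T \ T', g i :=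
    (sum_le_sum hfg).trans (sum_le_sum_of_subset_of_nonneg hST fun i hi _ ↦ hg i hi)
  rw [← sum_sdiff hS, ← sum_sdiff hT]
  calc ∑ i ∈ T', g i + (∑ i ∈ S' \ S, f i + ∑ i ∈ S, f i)
      = ∑ i ∈ S' \ S, f i + (∑ i ∈ T', g i + ∑ i ∈ S, f i) := by abel
    _ ≤ ∑ i ∈ T \ T', g i + (∑ i ∈ T', g i + ∑ i ∈ S, f i) := add_le_add_left hnew _
    _ = ∑ i ∈ T \ T', g i + ∑ i ∈ T', g i + ∑ i ∈ S, f i := by abel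

theorem Finset.sdiff_subset_sdiff_of_cover {ι : Type*} [Fintype ι] [DecidableEq ι]
    {S0 S1 Sbar S0' S1' Sbar' : Finset ι} (hcover : S0 ∪ S1 ∪ Sbar = univ)
    (h01' : Disjoint S0' S1') (h1b' : Disjoint S1' Sbar') (hd0 : S0 ⊆ S0') :
    S1' \ S1 ⊆ Sbar \ Sbar' := by
  intro i hi
  obtain ⟨hi1', hi1⟩ := mem_sdiff.mp hi
  have hcov : i ∈ S0 ∪ S1 ∪ Sbar := hcover ▸ mem_univ i
  have hi0 : i ∉ S0 := fun h ↦ disjoint_left.mp h01' (hd0 h) hi1'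
  simp only [mem_union, hi0, hi1, false_or] at hcov
  exact mem_sdiff.mpr ⟨hcov, disjoint_left.mp h1b' hi1'⟩

section Pivots

variable {m n : ℕ} (A : Fin m → Fin n → ℝ) (lam : ℝ) {M : ℝ}

theorem piv0_nonneg (hM : 0 ≤ M) (i : Fin n) (u : Fin m → ℝ) : 0 ≤ piv0 A lam M i u :=
  mul_nonneg hM (le_max_left _ _)

theorem piv_le_piv0 (hM : 0 ≤ M) (i : Fin n) (u : Fin m → ℝ) :
    piv A lam M i u ≤ piv0 A lam M i u :=
  mul_le_mul_of_nonneg_left (le_max_right _ _) hM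

theorem dualObj_le_of_descendant (y : Fin m → ℝ) (hM : 0 ≤ M)
    {S0 S1 Sbar S0' S1' Sbar' : Finset (Fin n)} (hcover : S0 ∪ S1 ∪ Sbar = univ)
    (h01' : Disjoint S0' S1') (h1b' : Disjoint S1' Sbar')
    (hd0 : S0 ⊆ S0') (hd1 : S1 ⊆ S1') (hdb : Sbar' ⊆ Sbar) (u : Fin m → ℝ) :
    dualObj A y lam M S1 Sbar u ≤ dualObj A y lam M S1' Sbar' u := by
  have hsum := sum_add_sum_le_of_sdiff_subset_sdiff hd1 hdb
    (sdiff_subset_sdiff_of_cover hcover h01' h1b' hd0)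
    (fun i _ ↦ piv_le_piv0 A lam hM i u) (fun i _ ↦ piv0_nonneg A lam hM i u)
  unfold dualObj
  linarith

end Pivots

theorem screening_nesting_general {m n : ℕ} (A : Fin m → Fin n → ℝ) (y : Fin m → ℝ)
    (lam M : ℝ) (hM : 0 < M)
    (S0 S1 Sbar S0' S1' Sbar' : Finset (Fin n))
    (hcover : S0 ∪ S1 ∪ Sbar = Finset.univ)
    (h01' : Disjoint S0' S1') (h1b' : Disjoint S1' Sbar')
    (hd0 : S0 ⊆ S0') (hd1 : S1 ⊆ S1') (hdb : Sbar' ⊆ Sbar)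
    (l : Fin n)
    (u : Fin m → ℝ) (pbar : ℝ)
    (htest : dualObj A y lam M S1 Sbar u + piv0 A lam M l u > pbar) :
    dualObj A y lam M S1' Sbar' u + piv0 A lam M l u > pbar := by
  have hmono := dualObj_le_of_descendant A lam y hM.le hcover h01' h1b' hd0 hd1 hdb u
  linarith

/-- Nesting property: if the zero-branch screening test passes for index ℓ at
node ν, it also passes at any descendant node ν' with ℓ still undecided. -/
theorem screening_nesting {m n : ℕ} (A : Fin m → Fin n → ℝ) (y : Fin m → ℝ)
    (lam M : ℝ) (hlam : 0 < lam) (hM : 0 < M)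
    (S0 S1 Sbar S0' S1' Sbar' : Finset (Fin n))
    (hcover : S0 ∪ S1 ∪ Sbar = Finset.univ)
    (h01 : Disjoint S0 S1) (h0b : Disjoint S0 Sbar) (h1b : Disjoint S1 Sbar)
    (hcover' : S0' ∪ S1' ∪ Sbar' = Finset.univ)
    (h01' : Disjoint S0' S1') (h0b' : Disjoint S0' Sbar') (h1b' : Disjoint S1' Sbar')
    (hd0 : S0 ⊆ S0') (hd1 : S1 ⊆ S1') (hdb : Sbar' ⊆ Sbar)
    (l : Fin n) (hl : l ∈ Sbar) (hl' : l ∈ Sbar')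
    (u : Fin m → ℝ) (pbar : ℝ)
    (htest : dualObj A y lam M S1 Sbar u + piv0 A lam M l u > pbar) :
    dualObj A y lam M S1' Sbar' u + piv0 A lam M l u > pbar :=
  screening_nesting_general A y lam M hM S0 S1 Sbar S0' S1' Sbar' hcover h01' h1b' hd0 hd1 hdb l u
    pbar htest
end

section
/- If both screening tests pass for the same index ℓ ∈ S̄ at node ν, i.e., D^ν(u) + π⁰_ℓ(u) > p̄ and D^ν(u) + π¹_ℓ(u) > p̄ with p̄ ≥ p*, then no x feasible at node ν (‖x‖∞ ≤ M, x_{S₀} = 0, x_{S₁} componentwise nonzero) achieves the global optimum p*, so node ν can be pruned. -/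
/-- Values of the full ℓ₀-penalized problem over the box ‖x‖∞ ≤ M. -/
noncomputable def fullSet {m n : ℕ} (A : Fin m → Fin n → ℝ) (y : Fin m → ℝ)
    (lam M : ℝ) : Set ℝ :=
  {c | ∃ x : Fin n → ℝ, (∀ i, |x i| ≤ M) ∧
    c = (1/2) * ∑ j, (y j - ∑ i, A j i * x i)^2
          + lam * ((Finset.univ.filter fun i => x i ≠ 0).card : ℝ)}

/-- Values of the node sub-problem at node ν = (S₀, S₁, S̄). -/
noncomputable def nodeSet {m n : ℕ} (A : Fin m → Fin n → ℝ) (y : Fin m → ℝ)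
    (lam M : ℝ) (S0 S1 Sbar : Finset (Fin n)) : Set ℝ :=
  {c | ∃ x : Fin n → ℝ, (∀ i, |x i| ≤ M) ∧ (∀ i ∈ S0, x i = 0) ∧
    c = (1/2) * ∑ j, (y j - ∑ i, A j i * x i)^2
          + lam * ((Sbar.filter fun i => x i ≠ 0).card : ℝ) + lam * S1.card}

/-!
Weak duality for the ℓ₁-relaxation, sharpened at the branching index `ℓ`. With `c = Aᵀu`, the
pointwise inequality `½y² - ½(y - u)² - uz ≤ ½(y - z)²` bounds the objective of `x` below by
`½‖y‖² - ½‖y - u‖² + ∑ᵢ (λ·[xᵢ ≠ 0] - xᵢcᵢ)`. On the box `|xᵢ| ≤ M` the `i`-th summand is at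
least `-πᵢ(u)` when `xᵢ ≠ 0` and at least `-π⁰ᵢ(u)` always; at `ℓ` it is at least `0` if `x_ℓ = 0`
and `π¹_ℓ(u) - π⁰_ℓ(u)` otherwise. So the objective exceeds `D^ν(u) + π⁰_ℓ(u)` or
`D^ν(u) + π¹_ℓ(u)`, and both lie above `p̄ ≥ p*`.
-/

open Finset

noncomputable def l0Lagrangian (lam a t : ℝ) : ℝ :=
  (if t ≠ 0 then lam else 0) - t * a

section Scalar

variable {lam M a t : ℝ}

lemma mul_le_mul_abs_of_abs_le_s18 (ht : |t| ≤ M) : t * a ≤ M * |a| :=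
  (le_abs_self _).trans <| by
    rw [abs_mul]; exact mul_le_mul_of_nonneg_right ht (abs_nonneg a)

lemma l0Lagrangian_of_eq_zero (h : t = 0) : l0Lagrangian lam a t = 0 := by
  simp [l0Lagrangian, h]

lemma neg_pivot_le_l0Lagrangian (hM : 0 < M) (ht : |t| ≤ M) (h0 : t ≠ 0) :
    -(M * (|a| - lam / M)) ≤ l0Lagrangian lam a t := by
  have := mul_le_mul_abs_of_abs_le_s18 (a := a) ht
  rw [l0Lagrangian, if_pos h0, mul_sub, mul_div_cancel₀ _ hM.ne']
  linarith

lemma neg_pivot0_le_l0Lagrangian (hM : 0 < M) (ht : |t| ≤ M) :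
    -(M * max 0 (|a| - lam / M)) ≤ l0Lagrangian lam a t := by
  rcases eq_or_ne t 0 with h | h
  · rw [l0Lagrangian_of_eq_zero h, neg_nonpos]
    exact mul_nonneg hM.le (le_max_left _ _)
  · exact (neg_le_neg (mul_le_mul_of_nonneg_left (le_max_right _ _) hM.le)).trans
      (neg_pivot_le_l0Lagrangian hM ht h)

lemma pivot1_sub_pivot0 :
    M * max 0 (lam / M - |a|) - M * max 0 (|a| - lam / M) = -(M * (|a| - lam / M)) := by
  rcases le_total (|a|) (lam / M) with h | h
  · rw [max_eq_right (by linarith), max_eq_left (by linarith)]; ring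
  · rw [max_eq_left (by linarith), max_eq_right (by linarith)]; ring

lemma neg_pivot0_add_branch_le_l0Lagrangian (hM : 0 < M) (ht : |t| ≤ M) :
    -(M * max 0 (|a| - lam / M)) +
        (if t = 0 then M * max 0 (|a| - lam / M) else M * max 0 (lam / M - |a|))
      ≤ l0Lagrangian lam a t := by
  split_ifs with h
  · rw [l0Lagrangian_of_eq_zero h, neg_add_cancel]
  · rw [neg_add_eq_sub, pivot1_sub_pivot0]
    exact neg_pivot_le_l0Lagrangian hM ht h

end Scalar

lemma half_sq_sub_le (y u z : ℝ) :
    1 / 2 * y ^ 2 - 1 / 2 * (y - u) ^ 2 - u * z ≤ 1 / 2 * (y - z) ^ 2 := by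
  nlinarith [sq_nonneg (y - z - u)]

section Node

variable {m n : ℕ} (A : Fin m → Fin n → ℝ) (y : Fin m → ℝ) (lam M : ℝ) (u : Fin m → ℝ)

lemma sum_l0Lagrangian_eq (x : Fin n → ℝ) :
    ∑ i, l0Lagrangian lam (∑ j, A j i * u j) (x i)
      = lam * ((univ.filter fun i => x i ≠ 0).card : ℝ) - ∑ j, u j * ∑ i, A j i * x i := by
  simp only [l0Lagrangian, sum_sub_distrib, ← sum_filter, sum_const, nsmul_eq_mul, mul_sum]
  rw [sum_comm, mul_comm]
  congr 1
  exact sum_congr rfl fun i _ => sum_congr rfl fun j _ => by ring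

lemma dual_add_sum_l0Lagrangian_le (x : Fin n → ℝ) :
    1 / 2 * ∑ j, y j ^ 2 - 1 / 2 * ∑ j, (y j - u j) ^ 2
        + ∑ i, l0Lagrangian lam (∑ j, A j i * u j) (x i)
      ≤ 1 / 2 * ∑ j, (y j - ∑ i, A j i * x i) ^ 2
        + lam * ((univ.filter fun i => x i ≠ 0).card : ℝ) := by
  have hquad := sum_le_sum fun j (_ : j ∈ univ) =>
    half_sq_sub_le (y j) (u j) (∑ i, A j i * x i)
  simp only [sum_sub_distrib, ← mul_sum] at hquad
  rw [sum_l0Lagrangian_eq]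
  linarith

variable {M} {S0 S1 Sbar : Finset (Fin n)}

lemma branch_le_sum_l0Lagrangian (hM : 0 < M) (hcover : S0 ∪ S1 ∪ Sbar = univ)
    (h01 : Disjoint S0 S1) (h0b : Disjoint S0 Sbar) (h1b : Disjoint S1 Sbar)
    {l : Fin n} (hl : l ∈ Sbar) {x : Fin n → ℝ} (hbox : ∀ i, |x i| ≤ M)
    (hS0 : ∀ i ∈ S0, x i = 0) (hS1 : ∀ i ∈ S1, x i ≠ 0) :
    -∑ i ∈ Sbar, piv0 A lam M i u - ∑ i ∈ S1, piv A lam M i u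
        + (if x l = 0 then piv0 A lam M l u else piv1 A lam M l u)
      ≤ ∑ i, l0Lagrangian lam (∑ j, A j i * u j) (x i) := by
  rw [← hcover, sum_union (disjoint_union_left.2 ⟨h0b, h1b⟩), sum_union h01,
    sum_eq_zero fun i hi => l0Lagrangian_of_eq_zero (hS0 i hi), zero_add]
  have hS1_le : -∑ i ∈ S1, piv A lam M i u
      ≤ ∑ i ∈ S1, l0Lagrangian lam (∑ j, A j i * u j) (x i) := by
    rw [← sum_neg_distrib]
    exact sum_le_sum fun i hi => neg_pivot_le_l0Lagrangian hM (hbox i) (hS1 i hi)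
  have hSbar_le : -∑ i ∈ Sbar, piv0 A lam M i u
        + (if x l = 0 then piv0 A lam M l u else piv1 A lam M l u)
      ≤ ∑ i ∈ Sbar, l0Lagrangian lam (∑ j, A j i * u j) (x i) := by
    rw [← add_sum_erase _ _ hl, ← add_sum_erase _ _ hl, neg_add, add_right_comm,
      ← sum_neg_distrib]
    exact add_le_add (neg_pivot0_add_branch_le_l0Lagrangian hM (hbox l))
      (sum_le_sum fun i _ => neg_pivot0_le_l0Lagrangian hM (hbox i))
  linarith

end Node

theorem prune_node_general {m n : ℕ} (A : Fin m → Fin n → ℝ) (y : Fin m → ℝ)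
    (lam M : ℝ) (hM : 0 < M)
    (S0 S1 Sbar : Finset (Fin n))
    (hcover : S0 ∪ S1 ∪ Sbar = Finset.univ)
    (h01 : Disjoint S0 S1) (h0b : Disjoint S0 Sbar) (h1b : Disjoint S1 Sbar)
    (l : Fin n) (hl : l ∈ Sbar) (u : Fin m → ℝ) (pbar : ℝ)
    (hpbar : sInf (fullSet A y lam M) ≤ pbar)
    (htest0 : dualObj A y lam M S1 Sbar u + piv0 A lam M l u > pbar)
    (htest1 : dualObj A y lam M S1 Sbar u + piv1 A lam M l u > pbar) :
    ∀ x : Fin n → ℝ, (∀ i, |x i| ≤ M) → (∀ i ∈ S0, x i = 0) →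
      (∀ i ∈ S1, x i ≠ 0) →
      (1/2) * ∑ j, (y j - ∑ i, A j i * x i)^2
          + lam * ((Finset.univ.filter fun i => x i ≠ 0).card : ℝ)
        > sInf (fullSet A y lam M) := by
  intro x hbox hS0 hS1
  have htest : pbar < dualObj A y lam M S1 Sbar u
      + if x l = 0 then piv0 A lam M l u else piv1 A lam M l u := by
    split_ifs
    exacts [htest0, htest1]
  have hbranch := branch_le_sum_l0Lagrangian A lam u hM hcover h01 h0b h1b hl hbox hS0 hS1
  have hduality := dual_add_sum_l0Lagrangian_le A y lam u x
  unfold dualObj at htest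
  linarith

/-- If both screening tests pass for the same index ℓ ∈ S̄ at node ν, then no x
feasible at node ν achieves the global optimum p*: node ν can be pruned. -/
theorem prune_node {m n : ℕ} (A : Fin m → Fin n → ℝ) (y : Fin m → ℝ)
    (lam M : ℝ) (hlam : 0 < lam) (hM : 0 < M)
    (S0 S1 Sbar : Finset (Fin n))
    (hcover : S0 ∪ S1 ∪ Sbar = Finset.univ)
    (h01 : Disjoint S0 S1) (h0b : Disjoint S0 Sbar) (h1b : Disjoint S1 Sbar)
    (l : Fin n) (hl : l ∈ Sbar) (u : Fin m → ℝ) (pbar : ℝ)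
    (hpbar : sInf (fullSet A y lam M) ≤ pbar)
    (htest0 : dualObj A y lam M S1 Sbar u + piv0 A lam M l u > pbar)
    (htest1 : dualObj A y lam M S1 Sbar u + piv1 A lam M l u > pbar) :
    ∀ x : Fin n → ℝ, (∀ i, |x i| ≤ M) → (∀ i ∈ S0, x i = 0) →
      (∀ i ∈ S1, x i ≠ 0) →
      (1/2) * ∑ j, (y j - ∑ i, A j i * x i)^2
          + lam * ((Finset.univ.filter fun i => x i ≠ 0).card : ℝ)
        > sInf (fullSet A y lam M) :=
  prune_node_general A y lam M hM S0 S1 Sbar hcover h01 h0b h1b l hl u pbar hpbar htest0 htest1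
end
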